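/- For X* ~ Sk(λ₁, λ₂) with mean μ = λ₁ - λ₂ and variance σ² = λ₁ + λ₂, the second-order partial moment satisfies E[(X*)² · 1_{X* ≥ 1}] = (σ² + μ²) · P(X* ≥ 1) + λ₂ μ · P(X* = 1) + λ₁ (1 + μ) · P(X* = 0). -/

import Mathlib

open Real Filter

/-- PMF of the Poisson distribution with mean `l`. -/
noncomputable def poissonPMF (l : ℝ) (n : ℕ) : ℝ :=
  Real.exp (-l) * l ^ n / n.factorial

/-- PMF of the Skellam distribution `Sk(l1, l2)`, i.e. the distribution of the
difference `X₁ - X₂` of independent Poisson variables with means `l1`, `l2`,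
obtained by the convolution formula. -/
noncomputable def skellamPMF (l1 l2 : ℝ) (x : ℤ) : ℝ :=
  ∑' k : ℕ, (if 0 ≤ x + (k : ℤ) then poissonPMF l1 (x + (k : ℤ)).toNat else 0) * poissonPMF l2 k

/-- Modified Bessel function of the first kind of integer order `n`,
`I_n(z) = (z/2)^|n| ∑_{k} (z/2)^{2k}/(k! (k+|n|)!)`, with `I_{-n} = I_n`. -/
noncomputable def besselI (n : ℤ) (z : ℝ) : ℝ :=
  (z / 2) ^ n.natAbs *
    ∑' k : ℕ, (z / 2) ^ (2 * k) / ((k.factorial : ℝ) * (k + n.natAbs).factorial)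

/-- Upper tail probability `P(X* ≥ a)` of the Skellam distribution. -/
noncomputable def skellamTail (l1 l2 : ℝ) (a : ℤ) : ℝ :=
  ∑' x : ℤ, if a ≤ x then skellamPMF l1 l2 x else 0

/-!
Multiplying the Poisson identity `(m + 1) P(m + 1) = λ P(m)` into the convolution formula gives the
recurrence `x p(x) = λ₁ p(x - 1) - λ₂ p(x + 1)` for the Skellam PMF `p`. Applying it twice,
`x² p(x)` is a combination of `p(x - 2), …, p(x + 2)`, so summing over `x ≥ 1` expresses the
partial moment through the tails `P(X* ≥ a)`, `-1 ≤ a ≤ 3`. Peeling these tails back to `P(X* ≥ 1)`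
leaves `p(-1), p(0), p(1), p(2)`, and the recurrence at `x = 0, 1` eliminates `p(-1)` and `p(2)`.
-/

open Function

section Tail

variable {E : Type*} [NormedAddCommGroup E] [CompleteSpace E]

lemma summable_ite_le {f : ℤ → E} (hf : Summable f) (a : ℤ) :
    Summable fun x => if a ≤ x then f x else 0 := by
  refine (hf.indicator (Set.Ici a)).congr fun x => ?_
  simp only [Set.indicator_apply, Set.mem_Ici]

lemma tsum_ite_le_eq_add {f : ℤ → E} (hf : Summable f) (a : ℤ) :
    ∑' x, (if a ≤ x then f x else 0) = f a + ∑' x, if a + 1 ≤ x then f x else 0 := by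
  rw [(summable_ite_le hf a).tsum_eq_add_tsum_ite a, if_pos le_rfl]
  congr 1
  refine tsum_congr fun x => ?_
  split_ifs <;> first | rfl | omega

lemma hasSum_ite_le_comp_add {f : ℤ → E} (hf : Summable f) (a d : ℤ) :
    HasSum (fun x => if a ≤ x then f (x + d) else 0) (∑' x, if a + d ≤ x then f x else 0) := by
  refine ((Equiv.addRight d).hasSum_iff.mpr (summable_ite_le hf (a + d)).hasSum).congr_fun
    fun x => ?_
  simp only [comp_apply, Equiv.coe_addRight, add_le_add_iff_right]

end Tail

lemma summable_poissonPMF (l : ℝ) : Summable (poissonPMF l) := by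
  refine ((Real.summable_pow_div_factorial l).mul_left (Real.exp (-l))).congr fun n => ?_
  rw [poissonPMF, mul_div_assoc]

lemma succ_mul_poissonPMF_succ (l : ℝ) (m : ℕ) :
    ((m : ℝ) + 1) * poissonPMF l (m + 1) = l * poissonPMF l m := by
  have hm : (m.factorial : ℝ) ≠ 0 := Nat.cast_ne_zero.2 m.factorial_ne_zero
  simp only [poissonPMF, Nat.factorial_succ, Nat.cast_mul, Nat.cast_succ]
  field_simp
  ring

noncomputable def skellamTerm (l1 l2 : ℝ) (x : ℤ) (k : ℕ) : ℝ :=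
  (if 0 ≤ x + (k : ℤ) then poissonPMF l1 (x + (k : ℤ)).toNat else 0) * poissonPMF l2 k

section Skellam

variable (l1 l2 : ℝ)

lemma skellamPMF_eq_tsum (x : ℤ) : skellamPMF l1 l2 x = ∑' k, skellamTerm l1 l2 x k := rfl

lemma add_mul_skellamTerm (x : ℤ) (k : ℕ) :
    ((x : ℝ) + k) * skellamTerm l1 l2 x k = l1 * skellamTerm l1 l2 (x - 1) k := by
  unfold skellamTerm
  rcases lt_trichotomy (x + (k : ℤ)) 0 with h | h | h
  · rw [if_neg (by omega), if_neg (by omega)]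
    ring
  · rw [if_neg (show ¬0 ≤ x - 1 + k by omega), show (x : ℝ) + k = 0 by exact_mod_cast h]
    ring
  · obtain ⟨m, hm⟩ : ∃ m : ℕ, x - 1 + (k : ℤ) = m := ⟨_, (Int.toNat_of_nonneg (by omega)).symm⟩
    have hx : x + (k : ℤ) = (m + 1 : ℕ) := by push_cast; omega
    rw [if_pos (by omega), if_pos (by omega), hm, hx, Int.toNat_natCast, Int.toNat_natCast,
      show (x : ℝ) + k = (m : ℝ) + 1 by exact_mod_cast hx]
    linear_combination poissonPMF l2 k * succ_mul_poissonPMF_succ l1 m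

lemma succ_mul_skellamTerm_succ (x : ℤ) (n : ℕ) :
    ((n : ℝ) + 1) * skellamTerm l1 l2 x (n + 1) = l2 * skellamTerm l1 l2 (x + 1) n := by
  unfold skellamTerm
  rw [show x + ((n + 1 : ℕ) : ℤ) = x + 1 + (n : ℤ) by push_cast; ring]
  linear_combination
    (if 0 ≤ x + 1 + (n : ℤ) then poissonPMF l1 (x + 1 + (n : ℤ)).toNat else 0) *
      succ_mul_poissonPMF_succ l2 n

/-- Substituting `x = n - k` turns the double series into the product of two Poisson series. -/
lemma summable_skellamTerm : Summable fun q : ℤ × ℕ => skellamTerm l1 l2 q.1 q.2 := by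
  set e : ℕ × ℕ → ℤ × ℕ := fun q => ((q.1 : ℤ) - q.2, q.2)
  have he : Injective e := fun p q h => by
    simp only [e, Prod.mk.injEq] at h
    ext <;> omega
  have hsupp : ∀ q ∉ Set.range e, skellamTerm l1 l2 q.1 q.2 = 0 := fun q hq => by
    have hneg : q.1 + (q.2 : ℤ) < 0 := by
      by_contra! hq'
      exact hq ⟨((q.1 + q.2).toNat, q.2), Prod.ext (by simp only [e]; omega) rfl⟩
    rw [skellamTerm, if_neg (by omega), zero_mul]
  rw [← he.summable_iff hsupp]
  have hcomp : (fun q : ℤ × ℕ => skellamTerm l1 l2 q.1 q.2) ∘ e =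
      fun q => poissonPMF l1 q.1 * poissonPMF l2 q.2 := funext fun q => by
    simp only [comp_apply, e, skellamTerm, sub_add_cancel, Int.toNat_natCast]
    rw [if_pos (by omega)]
  rw [hcomp]
  exact summable_mul_of_summable_norm (summable_norm_iff.mpr (summable_poissonPMF l1))
    (summable_norm_iff.mpr (summable_poissonPMF l2))

lemma summable_skellamPMF : Summable (skellamPMF l1 l2) :=
  (summable_skellamTerm l1 l2).prod

lemma mul_skellamPMF (x : ℤ) :
    (x : ℝ) * skellamPMF l1 l2 x
      = l1 * skellamPMF l1 l2 (x - 1) - l2 * skellamPMF l1 l2 (x + 1) := by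
  have hterm (y : ℤ) : HasSum (skellamTerm l1 l2 y) (skellamPMF l1 l2 y) :=
    ((summable_skellamTerm l1 l2).prod_factor y).hasSum
  have hk : HasSum (fun k : ℕ => (k : ℝ) * skellamTerm l1 l2 x k)
      (l2 * skellamPMF l1 l2 (x + 1)) := by
    rw [← hasSum_nat_add_iff' 1]
    simpa only [Nat.cast_add, Nat.cast_one, succ_mul_skellamTerm_succ, Finset.range_one,
      Finset.sum_singleton, Nat.cast_zero, zero_mul, sub_zero] using (hterm (x + 1)).mul_left l2
  have hxk : HasSum (fun k : ℕ => ((x : ℝ) + k) * skellamTerm l1 l2 x k)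
      (l1 * skellamPMF l1 l2 (x - 1)) := by
    simpa only [add_mul_skellamTerm] using (hterm (x - 1)).mul_left l1
  exact ((hterm x).mul_left (x : ℝ)).unique ((hxk.sub hk).congr_fun fun k => by ring)

lemma sq_mul_skellamPMF (x : ℤ) :
    (x : ℝ) ^ 2 * skellamPMF l1 l2 x
      = l1 ^ 2 * skellamPMF l1 l2 (x - 2) + l2 ^ 2 * skellamPMF l1 l2 (x + 2)
        + l1 * skellamPMF l1 l2 (x - 1) + l2 * skellamPMF l1 l2 (x + 1)
        - 2 * l1 * l2 * skellamPMF l1 l2 x := by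
  have hprev := mul_skellamPMF l1 l2 (x - 1)
  have hnext := mul_skellamPMF l1 l2 (x + 1)
  rw [sub_sub, sub_add_cancel, show (1 : ℤ) + 1 = 2 by norm_num] at hprev
  rw [add_sub_cancel_right, add_assoc, show (1 : ℤ) + 1 = 2 by norm_num] at hnext
  push_cast at hprev hnext
  linear_combination (x : ℝ) * mul_skellamPMF l1 l2 x + l1 * hprev - l2 * hnext

lemma skellamTail_eq_add (a : ℤ) :
    skellamTail l1 l2 a = skellamPMF l1 l2 a + skellamTail l1 l2 (a + 1) :=
  tsum_ite_le_eq_add (summable_skellamPMF l1 l2) a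

lemma hasSum_ite_skellamPMF_add (d : ℤ) :
    HasSum (fun x => if 1 ≤ x then skellamPMF l1 l2 (x + d) else 0) (skellamTail l1 l2 (1 + d)) :=
  hasSum_ite_le_comp_add (summable_skellamPMF l1 l2) 1 d

end Skellam

theorem skellam_partial_second_moment_general (l1 l2 : ℝ) :
    ∑' x : ℤ, (if 1 ≤ x then (x : ℝ) ^ 2 else 0) * skellamPMF l1 l2 x =
      ((l1 + l2) + (l1 - l2) ^ 2) * skellamTail l1 l2 1
        + l2 * (l1 - l2) * skellamPMF l1 l2 1
        + l1 * (1 + (l1 - l2)) * skellamPMF l1 l2 0 := by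
  have htail := hasSum_ite_skellamPMF_add l1 l2
  have hmoment : HasSum (fun x : ℤ => (if 1 ≤ x then (x : ℝ) ^ 2 else 0) * skellamPMF l1 l2 x)
      (l1 ^ 2 * skellamTail l1 l2 (1 + -2) + l2 ^ 2 * skellamTail l1 l2 (1 + 2)
        + l1 * skellamTail l1 l2 (1 + -1) + l2 * skellamTail l1 l2 (1 + 1)
        - 2 * l1 * l2 * skellamTail l1 l2 (1 + 0)) := by
    refine ((((((htail (-2)).mul_left (l1 ^ 2)).add ((htail 2).mul_left (l2 ^ 2))).add
      ((htail (-1)).mul_left l1)).add ((htail 1).mul_left l2)).sub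
      ((htail 0).mul_left (2 * l1 * l2))).congr_fun fun x => ?_
    split_ifs
    · simp only [sq_mul_skellamPMF, ← sub_eq_add_neg, add_zero]
    · ring
  have hrec0 := mul_skellamPMF l1 l2 0
  have hrec1 := mul_skellamPMF l1 l2 1
  have hTm1 := skellamTail_eq_add l1 l2 (-1)
  have hT0 := skellamTail_eq_add l1 l2 0
  have hT1 := skellamTail_eq_add l1 l2 1
  have hT2 := skellamTail_eq_add l1 l2 2
  norm_num at hrec0 hrec1 hTm1 hT0 hT1 hT2
  rw [hmoment.tsum_eq]
  norm_num
  linear_combination l1 ^ 2 * hTm1 + (l1 ^ 2 + l1) * hT0 - (l2 ^ 2 + l2) * hT1 - l2 ^ 2 * hT2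
    - l1 * hrec0 - l2 * hrec1

theorem skellam_partial_second_moment (l1 l2 : ℝ) (h1 : 0 < l1) (h2 : 0 < l2) :
    ∑' x : ℤ, (if 1 ≤ x then (x : ℝ) ^ 2 else 0) * skellamPMF l1 l2 x =
      ((l1 + l2) + (l1 - l2) ^ 2) * skellamTail l1 l2 1
        + l2 * (l1 - l2) * skellamPMF l1 l2 1
        + l1 * (1 + (l1 - l2)) * skellamPMF l1 l2 0 :=
  skellam_partial_second_moment_general l1 l2
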